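/- Let Ω ⊂ ℝⁿ be measurable, let γ_e, γ_s ∈ L¹(ℝⁿ) be even kernels, set γ := γ_e + γ_s and Γ_s := ∫_{ℝⁿ} γ_s. Let B_e and B denote the nonlocal bilinear forms with kernels γ_e and γ respectively. Suppose β > 0 is such that B_e[u,u] ≥ β‖u‖²_{L²(Ω)} for every u ∈ L²(ℝⁿ) vanishing almost everywhere outside Ω, and suppose ‖γ_s‖_{L¹(ℝⁿ)} − Γ_s < β. Then for every such u, B[u,u] ≥ (β + Γ_s − ‖γ_s‖_{L¹(ℝⁿ)}) ‖u‖²_{L²(Ω)}. -/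

import Mathlib

/-!
Writing `B[u,u] = ½ ∬ (u y - u x)² γ(x - y)` as one integral over `ℝⁿ × ℝⁿ` makes it additive
in the kernel, so `B = B_e + B_s`. The pointwise bound `(b - a)² c ≥ (a² + b²)(c - |c|)` and the
invariance of Lebesgue measure under `(x, y) ↦ (y, x - y)` and `z ↦ -z`, which turn
`∬ u(x)² m(x - y)` and `∬ u(y)² m(x - y)` into `‖u‖² ∫ m`, give
`B_s[u,u] ≥ (Γ_s - ‖γ_s‖_{L¹}) ‖u‖²_{L²(ℝⁿ)}`, and `‖u‖_{L²(ℝⁿ)} = ‖u‖_{L²(Ω)}` because `u`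
vanishes outside `Ω`.
-/

open MeasureTheory

/-- The nonlocal bilinear form
`B[u,v] = (1/2) ∬ (u(y)-u(x)) γ(x-y) (v(y)-v(x)) dy dx`. -/
noncomputable def nonlocalForm (n : ℕ) (γ u v : EuclideanSpace ℝ (Fin n) → ℝ) : ℝ :=
  (1/2) * ∫ x, ∫ y, (u y - u x) * γ (x - y) * (v y - v x)

theorem sq_mul_sub_abs_add_sq_mul_sub_abs_le (a b c : ℝ) :
    a ^ 2 * (c - |c|) + b ^ 2 * (c - |c|) ≤ (b - a) ^ 2 * c := by
  rcases abs_cases c with ⟨hc, hpos⟩ | ⟨hc, hneg⟩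
  · rw [hc, sub_self]
    nlinarith [mul_nonneg (sq_nonneg (b - a)) hpos]
  · rw [hc]
    nlinarith [mul_nonneg (sq_nonneg (a + b)) (neg_nonneg.mpr hneg.le)]

section ProdSub

variable {G 𝕜 : Type*} [AddCommGroup G] [MeasurableSpace G] [MeasurableAdd₂ G] [MeasurableNeg G]
  {μ : Measure G} [SFinite μ] [μ.IsAddRightInvariant] [RCLike 𝕜] {f k : G → 𝕜}

theorem MeasureTheory.Integrable.comp_snd_mul_comp_sub (hf : Integrable f μ)
    (hk : Integrable k μ) :
    Integrable (fun p : G × G => f p.2 * k (p.1 - p.2)) (μ.prod μ) :=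
  ((measurePreserving_prod_sub_swap μ μ).integrable_comp
    (hf.mul_prod hk).aestronglyMeasurable).mpr (hf.mul_prod hk)

theorem integral_comp_snd_mul_comp_sub (f k : G → 𝕜) :
    ∫ p : G × G, f p.2 * k (p.1 - p.2) ∂μ.prod μ = (∫ x, f x ∂μ) * ∫ z, k z ∂μ := by
  have hshear : MeasurePreserving (MeasurableEquiv.prodComm.trans
      (MeasurableEquiv.shearSubRight G)) (μ.prod μ) (μ.prod μ) :=
    measurePreserving_prod_sub_swap μ μ
  rw [← integral_prod_mul f k]
  exact hshear.integral_comp' (fun q => f q.1 * k q.2)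

variable [μ.IsNegInvariant]

theorem MeasureTheory.Integrable.comp_fst_mul_comp_sub (hf : Integrable f μ)
    (hk : Integrable k μ) :
    Integrable (fun p : G × G => f p.1 * k (p.1 - p.2)) (μ.prod μ) := by
  have := (hf.comp_snd_mul_comp_sub hk.comp_neg).swap
  simpa only [Function.comp_def, Prod.fst_swap, Prod.snd_swap, neg_sub] using this

theorem integral_comp_fst_mul_comp_sub (f k : G → 𝕜) :
    ∫ p : G × G, f p.1 * k (p.1 - p.2) ∂μ.prod μ = (∫ x, f x ∂μ) * ∫ z, k z ∂μ := by
  rw [← integral_prod_swap, ← integral_neg_eq_self k μ,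
    ← integral_comp_snd_mul_comp_sub f (fun z => k (-z))]
  simp only [Prod.fst_swap, Prod.snd_swap, neg_sub]

end ProdSub

section NonlocalEnergy

variable {G : Type*} [AddCommGroup G] [MeasurableSpace G] [MeasurableAdd₂ G] [MeasurableNeg G]
  {μ : Measure G} [SFinite μ] [μ.IsAddRightInvariant] [μ.IsNegInvariant] {k u : G → ℝ}

theorem MeasureTheory.Integrable.sq_sub_mul_comp_sub (hk : Integrable k μ) (hu : MemLp u 2 μ) :
    Integrable (fun p : G × G => (u p.2 - u p.1) ^ 2 * k (p.1 - p.2)) (μ.prod μ) := by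
  have hu2 : Integrable (fun x => u x ^ 2) μ := hu.integrable_sq
  have h2k : Integrable (fun z => 2 * |k z|) μ := hk.abs.const_mul 2
  refine ((hu2.comp_fst_mul_comp_sub h2k).add (hu2.comp_snd_mul_comp_sub h2k)).mono' ?_ ?_
  · exact ((hu.aestronglyMeasurable.comp_snd.sub hu.aestronglyMeasurable.comp_fst).pow 2).mul
      (hk.aestronglyMeasurable.comp_quasiMeasurePreserving
        (quasiMeasurePreserving_sub_of_right_invariant μ μ))
  · refine ae_of_all _ fun p => ?_
    rw [Pi.add_apply, Real.norm_eq_abs, abs_mul, abs_sq]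
    nlinarith [mul_nonneg (sq_nonneg (u p.1 + u p.2)) (abs_nonneg (k (p.1 - p.2)))]

theorem two_mul_integral_sub_integral_abs_mul_le (hk : Integrable k μ) (hu : MemLp u 2 μ) :
    2 * ((∫ z, k z ∂μ) - ∫ z, |k z| ∂μ) * ∫ x, u x ^ 2 ∂μ ≤
      ∫ p : G × G, (u p.2 - u p.1) ^ 2 * k (p.1 - p.2) ∂μ.prod μ := by
  set m : G → ℝ := fun z => k z - |k z|
  have hm : Integrable m μ := hk.sub hk.abs
  have hu2 : Integrable (fun x => u x ^ 2) μ := hu.integrable_sq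
  calc 2 * ((∫ z, k z ∂μ) - ∫ z, |k z| ∂μ) * ∫ x, u x ^ 2 ∂μ
      = ∫ p : G × G, (u p.1 ^ 2 * m (p.1 - p.2) + u p.2 ^ 2 * m (p.1 - p.2)) ∂μ.prod μ := by
        rw [integral_add (hu2.comp_fst_mul_comp_sub hm) (hu2.comp_snd_mul_comp_sub hm),
          integral_comp_fst_mul_comp_sub (fun x => u x ^ 2) m,
          integral_comp_snd_mul_comp_sub (fun x => u x ^ 2) m,
          integral_sub hk hk.abs]
        ring
    _ ≤ _ := integral_mono ((hu2.comp_fst_mul_comp_sub hm).add (hu2.comp_snd_mul_comp_sub hm))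
        (hk.sq_sub_mul_comp_sub hu) fun p => sq_mul_sub_abs_add_sq_mul_sub_abs_le _ _ _

end NonlocalEnergy

section NonlocalForm

variable {n : ℕ} {k k₁ k₂ u : EuclideanSpace ℝ (Fin n) → ℝ}

theorem nonlocalForm_self_eq_integral_prod (hk : Integrable k) (hu : MemLp u 2 volume) :
    nonlocalForm n k u u =
      1 / 2 * ∫ p, (u p.2 - u p.1) ^ 2 * k (p.1 - p.2) ∂volume.prod volume := by
  have hsq (x y : EuclideanSpace ℝ (Fin n)) :
      (u y - u x) * k (x - y) * (u y - u x) = (u y - u x) ^ 2 * k (x - y) := by ring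
  simp only [nonlocalForm, hsq]
  rw [integral_integral (hk.sq_sub_mul_comp_sub hu)]

theorem nonlocalForm_add_kernel_self (hk₁ : Integrable k₁) (hk₂ : Integrable k₂)
    (hu : MemLp u 2 volume) :
    nonlocalForm n (fun z => k₁ z + k₂ z) u u =
      nonlocalForm n k₁ u u + nonlocalForm n k₂ u u := by
  rw [nonlocalForm_self_eq_integral_prod (k := fun z => k₁ z + k₂ z) (hk₁.add hk₂) hu,
    nonlocalForm_self_eq_integral_prod hk₁ hu, nonlocalForm_self_eq_integral_prod hk₂ hu, ← mul_add,
    ← integral_add (hk₁.sq_sub_mul_comp_sub hu) (hk₂.sq_sub_mul_comp_sub hu)]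
  simp only [mul_add]

theorem integral_sub_integral_abs_mul_le_nonlocalForm_self (hk : Integrable k)
    (hu : MemLp u 2 volume) :
    ((∫ z, k z) - ∫ z, |k z|) * ∫ x, u x ^ 2 ≤ nonlocalForm n k u u := by
  rw [nonlocalForm_self_eq_integral_prod hk hu]
  linarith [two_mul_integral_sub_integral_abs_mul_le hk hu]

end NonlocalForm

theorem nonlocalForm_coercive_perturbation_general
    (n : ℕ) (Ω : Set (EuclideanSpace ℝ (Fin n)))
    (γe γs : EuclideanSpace ℝ (Fin n) → ℝ)
    (hγe : Integrable γe) (hγs : Integrable γs)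
    (β : ℝ)
    (hcoerc : ∀ u : EuclideanSpace ℝ (Fin n) → ℝ,
      MemLp u 2 (volume : Measure (EuclideanSpace ℝ (Fin n))) →
      (∀ᵐ x, x ∉ Ω → u x = 0) →
      β * ∫ x in Ω, (u x) ^ 2 ≤ nonlocalForm n γe u u) :
    ∀ u : EuclideanSpace ℝ (Fin n) → ℝ,
      MemLp u 2 (volume : Measure (EuclideanSpace ℝ (Fin n))) →
      (∀ᵐ x, x ∉ Ω → u x = 0) →
      (β + (∫ z, γs z) - ∫ z, |γs z|) * ∫ x in Ω, (u x) ^ 2 ≤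
        nonlocalForm n (fun z => γe z + γs z) u u := by
  intro u hu hsupp
  have hsupp_sq : ∫ x in Ω, u x ^ 2 = ∫ x, u x ^ 2 :=
    setIntegral_eq_integral_of_ae_compl_eq_zero
      (hsupp.mono fun x hx hxΩ => by rw [hx hxΩ, zero_pow two_ne_zero])
  rw [nonlocalForm_add_kernel_self hγe hγs hu]
  calc (β + (∫ z, γs z) - ∫ z, |γs z|) * ∫ x in Ω, u x ^ 2
      = β * (∫ x in Ω, u x ^ 2) + ((∫ z, γs z) - ∫ z, |γs z|) * ∫ x, u x ^ 2 := by
        rw [hsupp_sq]; ring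
    _ ≤ nonlocalForm n γe u u + nonlocalForm n γs u u := add_le_add (hcoerc u hu hsupp)
        (integral_sub_integral_abs_mul_le_nonlocalForm_self hγs hu)

/-- Coercivity is preserved under a small perturbation of the kernel: if `B_e` (kernel
`γ_e`) is coercive with constant `β` on functions vanishing outside `Ω` and
`‖γ_s‖_{L¹} - ∫ γ_s < β`, then the form `B` with kernel `γ = γ_e + γ_s` satisfies
`B[u,u] ≥ (β + ∫γ_s - ‖γ_s‖_{L¹}) ‖u‖²_{L²(Ω)}`. -/
theorem nonlocalForm_coercive_perturbation
    (n : ℕ) (Ω : Set (EuclideanSpace ℝ (Fin n))) (hΩ : MeasurableSet Ω)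
    (γe γs : EuclideanSpace ℝ (Fin n) → ℝ)
    (hγe : Integrable γe) (hγs : Integrable γs)
    (hγe_even : ∀ z, γe (-z) = γe z) (hγs_even : ∀ z, γs (-z) = γs z)
    (β : ℝ) (hβ : 0 < β)
    (hcoerc : ∀ u : EuclideanSpace ℝ (Fin n) → ℝ,
      MemLp u 2 (volume : Measure (EuclideanSpace ℝ (Fin n))) →
      (∀ᵐ x, x ∉ Ω → u x = 0) →
      β * ∫ x in Ω, (u x) ^ 2 ≤ nonlocalForm n γe u u)
    (hsmall : (∫ z, |γs z|) - (∫ z, γs z) < β) :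
    ∀ u : EuclideanSpace ℝ (Fin n) → ℝ,
      MemLp u 2 (volume : Measure (EuclideanSpace ℝ (Fin n))) →
      (∀ᵐ x, x ∉ Ω → u x = 0) →
      (β + (∫ z, γs z) - ∫ z, |γs z|) * ∫ x in Ω, (u x) ^ 2 ≤
        nonlocalForm n (fun z => γe z + γs z) u u :=
  nonlocalForm_coercive_perturbation_general n Ω γe γs hγe hγs β hcoerc
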